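/- Let 𝓑 be a directed family with U ∈ 𝓑, and 𝓢, 𝓣 two ⊴-minimal representatives of a constructible set X with |𝓢| = |𝓣| = N > 0. Then for every B ∈ Lev_0(𝓢) there exists C ∈ Lev_0(𝓣) with B ⊆ C or C ⊆ B. -/

import Mathlib

variable {U : Type*}

/-- A directed family: nonempty sets, any two nested or disjoint. -/
def DirFam (𝓑 : Set (Set U)) : Prop :=
  (∀ B ∈ 𝓑, B.Nonempty) ∧
    ∀ B₀ ∈ 𝓑, ∀ B₁ ∈ 𝓑, B₀ ⊆ B₁ ∨ B₁ ⊆ B₀ ∨ B₀ ∩ B₁ = ∅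

/-- Constructible sets: finite boolean combinations of balls. -/
inductive Constr (𝓑 : Set (Set U)) : Set U → Prop
  | ball {B : Set U} : B ∈ 𝓑 → Constr 𝓑 B
  | compl {X : Set U} : Constr 𝓑 X → Constr 𝓑 Xᶜ
  | union {X Y : Set U} : Constr 𝓑 X → Constr 𝓑 Y → Constr 𝓑 (X ∪ Y)

/-- Levels of a (finite) subset of a partial order: Lev 0 is the set of maximal
elements, and Lev (n+1) is Lev n of the set with its maximal elements removed. -/
def Lev {α : Type*} [PartialOrder α] : ℕ → Set α → Set α
  | 0, S => {a | a ∈ S ∧ ∀ b ∈ S, a ≤ b → a = b}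
  | n + 1, S => Lev n (S \ {a | a ∈ S ∧ ∀ b ∈ S, a ≤ b → a = b})

/-- The swiss cheese operator: the union, over balls B on even levels of 𝓢, of
B minus the union of its immediate predecessors (the next-level balls inside B). -/
def Ch (𝓢 : Set (Set U)) : Set U :=
  ⋃ n : ℕ, ⋃ B ∈ Lev (2 * n) 𝓢, B \ ⋃₀ {C | C ∈ Lev (2 * n + 1) 𝓢 ∧ C ⊆ B}

/-- A finite forest: the elements above any given element form a chain. -/
def FinForest {α : Type*} [PartialOrder α] (S : Set α) : Prop :=
  ∀ a ∈ S, IsChain (· ≤ ·) {b | b ∈ S ∧ a ≤ b}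

/-- The quasi-order ⊴ on finite forests: first by cardinality, then by top-heaviness
of the level sizes. -/
def ForestQO {α β : Type*} [PartialOrder α] [PartialOrder β] (S : Set α) (T : Set β) :
    Prop :=
  S.ncard < T.ncard ∨
    (S.ncard = T.ncard ∧
      ((∀ n, (Lev n S).ncard = (Lev n T).ncard) ∨
        ∃ n, (∀ i < n, (Lev i S).ncard = (Lev i T).ncard) ∧
          (Lev n T).ncard < (Lev n S).ncard))

/-! If a top ball `B` of `𝓢` were comparable with no top ball of `𝓣`, then, the balls forming a
directed family, `B` would be disjoint from every ball of `𝓣` and hence from `Ch 𝓣 = X`. By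
maximality of `B`, the balls of `𝓢` not contained in `B` are disjoint from `B`, so `𝓢` splits
into two families whose levels and `Ch` add up; the part inside `B` contributes only points of
`B`, none of which lie in `X`. Discarding it leaves a strictly smaller representative of `X`,
contradicting minimality of `𝓢`. -/

section Levels

variable {α : Type*} [PartialOrder α]

theorem lev_zero_eq (S : Set α) : Lev 0 S = {a | Maximal (· ∈ S) a} := by
  ext a
  exact ⟨fun ⟨ha, hmax⟩ => ⟨ha, fun b hb hab => (hmax b hb hab).ge⟩,
    fun ⟨ha, hmax⟩ => ⟨ha, fun b hb hab => le_antisymm hab (hmax hb hab)⟩⟩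

theorem lev_succ (n : ℕ) (S : Set α) : Lev (n + 1) S = Lev n (S \ Lev 0 S) := rfl

theorem lev_subset : ∀ (n : ℕ) (S : Set α), Lev n S ⊆ S
  | 0, _ => fun _ ha => ha.1
  | n + 1, _ => fun _ ha => (lev_subset n _ ha).1

theorem exists_mem_lev_zero_le {S : Set α} (hS : S.Finite) {a : α} (ha : a ∈ S) :
    ∃ b ∈ Lev 0 S, a ≤ b := by
  obtain ⟨b, hab, hb⟩ := hS.exists_le_maximal ha
  exact ⟨b, (lev_zero_eq S).symm ▸ hb, hab⟩

variable {A B : Set α}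

theorem lev_zero_union (hAB : ∀ a ∈ A, ∀ b ∈ B, ¬a ≤ b ∧ ¬b ≤ a) :
    Lev 0 (A ∪ B) = Lev 0 A ∪ Lev 0 B := by
  ext x
  constructor
  · rintro ⟨hx | hx, hmax⟩
    · exact Or.inl ⟨hx, fun c hc => hmax c (Or.inl hc)⟩
    · exact Or.inr ⟨hx, fun c hc => hmax c (Or.inr hc)⟩
  · rintro (⟨hx, hmax⟩ | ⟨hx, hmax⟩)
    · refine ⟨Or.inl hx, ?_⟩
      rintro c (hc | hc) hxc
      exacts [hmax c hc hxc, absurd hxc (hAB x hx c hc).1]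
    · refine ⟨Or.inr hx, ?_⟩
      rintro c (hc | hc) hxc
      exacts [absurd hxc (hAB c hc x hx).2, hmax c hc hxc]

theorem lev_union (hAB : ∀ a ∈ A, ∀ b ∈ B, ¬a ≤ b ∧ ¬b ≤ a) (n : ℕ) :
    Lev n (A ∪ B) = Lev n A ∪ Lev n B := by
  induction n generalizing A B with
  | zero => exact lev_zero_union hAB
  | succ n ih =>
    have hdisj : ∀ x ∈ A, x ∉ B := fun x hxA hxB => (hAB x hxA x hxB).1 le_rfl
    have hsplit : (A ∪ B) \ Lev 0 (A ∪ B) = (A \ Lev 0 A) ∪ (B \ Lev 0 B) := by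
      rw [lev_zero_union hAB]
      ext x
      have hxAB := hdisj x
      have hxA : x ∈ Lev 0 A → x ∈ A := fun hx => lev_subset 0 A hx
      have hxB : x ∈ Lev 0 B → x ∈ B := fun hx => lev_subset 0 B hx
      simp only [Set.mem_sdiff, Set.mem_union]
      tauto
    rw [lev_succ, hsplit, ih fun a ha b hb => hAB a ha.1 b hb.1]
    rfl

theorem lev_union_sep_le_of_mem_left (hAB : ∀ a ∈ A, ∀ b ∈ B, ¬a ≤ b ∧ ¬b ≤ a) {a : α}
    (ha : a ∈ A) (n : ℕ) : {c | c ∈ Lev n (A ∪ B) ∧ c ≤ a} = {c | c ∈ Lev n A ∧ c ≤ a} := by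
  rw [lev_union hAB]
  ext c
  exact ⟨fun ⟨hc, hca⟩ => ⟨hc.resolve_right fun hcB => (hAB a ha c (lev_subset n B hcB)).2 hca, hca⟩,
    fun ⟨hc, hca⟩ => ⟨Or.inl hc, hca⟩⟩

end Levels

section Cheese

theorem ch_subset_sUnion (𝓢 : Set (Set U)) : Ch 𝓢 ⊆ ⋃₀ 𝓢 := by
  intro x hx
  simp only [Ch, Set.mem_iUnion] at hx
  obtain ⟨n, B, hB, hxB, -⟩ := hx
  exact ⟨B, lev_subset _ 𝓢 hB, hxB⟩

theorem ch_union {𝓐 𝓒 : Set (Set U)} (hdisj : ∀ A ∈ 𝓐, ∀ C ∈ 𝓒, Disjoint A C)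
    (h𝓐 : ∀ A ∈ 𝓐, A.Nonempty) (h𝓒 : ∀ C ∈ 𝓒, C.Nonempty) :
    Ch (𝓐 ∪ 𝓒) = Ch 𝓐 ∪ Ch 𝓒 := by
  have hincomp : ∀ A ∈ 𝓐, ∀ C ∈ 𝓒, ¬A ⊆ C ∧ ¬C ⊆ A := fun A hA C hC =>
    ⟨fun hAC => (h𝓐 A hA).ne_empty ((hdisj A hA C hC).eq_bot_of_le hAC),
      fun hCA => (h𝓒 C hC).ne_empty ((hdisj A hA C hC).symm.eq_bot_of_le hCA)⟩
  have hincomp' : ∀ C ∈ 𝓒, ∀ A ∈ 𝓐, ¬C ⊆ A ∧ ¬A ⊆ C := fun C hC A hA =>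
    (hincomp A hA C hC).symm
  unfold Ch
  rw [← Set.iUnion_union_distrib]
  refine Set.iUnion_congr fun n => ?_
  rw [lev_union hincomp, Set.biUnion_union]
  congr 1
  · refine Set.iUnion₂_congr fun A hA => ?_
    rw [lev_union_sep_le_of_mem_left hincomp (lev_subset _ _ hA)]
  · refine Set.iUnion₂_congr fun C hC => ?_
    rw [Set.union_comm, lev_union_sep_le_of_mem_left hincomp' (lev_subset _ _ hC)]

variable {𝓑 : Set (Set U)}

theorem DirFam.disjoint_ch_of_forall_lev_zero (h : DirFam 𝓑) {B : Set U} (hB : B ∈ 𝓑)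
    {𝓣 : Set (Set U)} (h𝓣 : 𝓣 ⊆ 𝓑) (hfin : 𝓣.Finite)
    (hincomp : ∀ C ∈ Lev 0 𝓣, ¬B ⊆ C ∧ ¬C ⊆ B) : Disjoint B (Ch 𝓣) := by
  refine Set.disjoint_of_subset_right (ch_subset_sUnion 𝓣) (Set.disjoint_sUnion_right.2 ?_)
  intro D hD
  obtain ⟨C, hC, hDC⟩ := exists_mem_lev_zero_le hfin hD
  have hBC : Disjoint B C := by
    rcases h.2 B hB C (h𝓣 (lev_subset 0 𝓣 hC)) with hBC | hCB | hBC
    exacts [absurd hBC (hincomp C hC).1, absurd hCB (hincomp C hC).2,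
      Set.disjoint_iff_inter_eq_empty.2 hBC]
  exact hBC.mono_right hDC

theorem DirFam.ch_sep_not_subset_eq (h : DirFam 𝓑) {𝓢 : Set (Set U)} (h𝓢 : 𝓢 ⊆ 𝓑)
    {B : Set U} (hB : B ∈ Lev 0 𝓢) (hdisj : Disjoint B (Ch 𝓢)) :
    Ch {C | C ∈ 𝓢 ∧ ¬C ⊆ B} = Ch 𝓢 := by
  set 𝓡 := {C | C ∈ 𝓢 ∧ ¬C ⊆ B}
  set 𝓘 := {C | C ∈ 𝓢 ∧ C ⊆ B}
  have hdisj𝓡 : ∀ A ∈ 𝓡, ∀ C ∈ 𝓘, Disjoint A C := by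
    rintro A ⟨hA, hAB⟩ C ⟨-, hCB⟩
    rcases h.2 A (h𝓢 hA) B (h𝓢 hB.1) with hAB' | hBA | hAB'
    · exact absurd hAB' hAB
    · exact absurd (hB.2 A hA hBA).ge hAB
    · exact (Set.disjoint_iff_inter_eq_empty.2 hAB').mono_right hCB
  have hsplit : Ch 𝓢 = Ch 𝓡 ∪ Ch 𝓘 := by
    rw [← ch_union hdisj𝓡 (fun A hA => h.1 A (h𝓢 hA.1)) (fun C hC => h.1 C (h𝓢 hC.1))]
    congr 1
    ext C
    simp only [𝓡, 𝓘, Set.mem_union, Set.mem_ofPred_eq]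
    tauto
  have h𝓘 : Ch 𝓘 ⊆ B := (ch_subset_sUnion 𝓘).trans (Set.sUnion_subset fun C hC => hC.2)
  have h𝓘_empty : Ch 𝓘 = ∅ :=
    Set.subset_empty_iff.1 fun x hx => hdisj.ne_of_mem (h𝓘 hx) (hsplit ▸ Or.inr hx) rfl
  rw [hsplit, h𝓘_empty, Set.union_empty]

end Cheese

theorem not_forestQO_of_ncard_lt {α β : Type*} [PartialOrder α] [PartialOrder β] {S : Set α}
    {T : Set β} (hlt : T.ncard < S.ncard) : ¬ForestQO S T := by
  rintro (hST | ⟨hST, -⟩) <;> omega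

theorem stmt15_general (𝓑 : Set (Set U)) (h : DirFam 𝓑)
    (X : Set U) (𝓢 𝓣 : Set (Set U))
    (h𝓢 : 𝓢 ⊆ 𝓑) (h𝓣 : 𝓣 ⊆ 𝓑) (hfS : 𝓢.Finite) (hfT : 𝓣.Finite)
    (hS : Ch 𝓢 = X) (hT : Ch 𝓣 = X)
    (hminS : ∀ 𝓡 : Set (Set U), 𝓡 ⊆ 𝓑 → 𝓡.Finite → Ch 𝓡 = X → ForestQO 𝓢 𝓡) :
    ∀ B ∈ Lev 0 𝓢, ∃ C ∈ Lev 0 𝓣, B ⊆ C ∨ C ⊆ B := by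
  intro B hB
  by_contra! hincomp
  have hdisj : Disjoint B (Ch 𝓢) := by
    rw [hS, ← hT]
    exact h.disjoint_ch_of_forall_lev_zero (h𝓢 (lev_subset 0 𝓢 hB)) h𝓣 hfT hincomp
  set 𝓡 := {C | C ∈ 𝓢 ∧ ¬C ⊆ B}
  have h𝓡 : 𝓡 ⊂ 𝓢 :=
    (Set.ssubset_iff_of_subset fun C hC => hC.1).2 ⟨B, hB.1, fun hB𝓡 => hB𝓡.2 subset_rfl⟩
  have hCh𝓡 : Ch 𝓡 = X := (h.ch_sep_not_subset_eq h𝓢 hB hdisj).trans hS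
  exact not_forestQO_of_ncard_lt (Set.ncard_lt_ncard h𝓡 hfS)
    (hminS 𝓡 (fun C hC => h𝓢 hC.1) (hfS.subset h𝓡.1) hCh𝓡)

/-- For ⊴-minimal representatives 𝓢, 𝓣 of X of the same positive size, every top-level
ball of 𝓢 is comparable with some top-level ball of 𝓣. -/
theorem stmt15 (𝓑 : Set (Set U)) (h : DirFam 𝓑) (hU : (Set.univ : Set U) ∈ 𝓑)
    (X : Set U) (hX : Constr 𝓑 X) (𝓢 𝓣 : Set (Set U))
    (h𝓢 : 𝓢 ⊆ 𝓑) (h𝓣 : 𝓣 ⊆ 𝓑) (hfS : 𝓢.Finite) (hfT : 𝓣.Finite)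
    (hS : Ch 𝓢 = X) (hT : Ch 𝓣 = X)
    (hminS : ∀ 𝓡 : Set (Set U), 𝓡 ⊆ 𝓑 → 𝓡.Finite → Ch 𝓡 = X → ForestQO 𝓢 𝓡)
    (hminT : ∀ 𝓡 : Set (Set U), 𝓡 ⊆ 𝓑 → 𝓡.Finite → Ch 𝓡 = X → ForestQO 𝓣 𝓡)
    (N : ℕ) (hN : 0 < N) (hcS : 𝓢.ncard = N) (hcT : 𝓣.ncard = N) :
    ∀ B ∈ Lev 0 𝓢, ∃ C ∈ Lev 0 𝓣, B ⊆ C ∨ C ⊆ B :=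
  stmt15_general 𝓑 h X 𝓢 𝓣 h𝓢 h𝓣 hfS hfT hS hT hminS
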